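/- The map f ⊗ r ⊗ g ↦ (f·∂_s(−r·(s·ρ)) ⊗ g, f·∂_s(r) ⊗ g) is an isomorphism of R-bimodules R ⊗_{R^s} R ⊗_{R^s} R ≅ (R ⊗_{R^s} R) ⊕ (R ⊗_{R^s} R), where in the first summand the right-hand tensor factor is paired via f·∂_s(−r·(s·ρ)) ⊗ g ∈ R ⊗_{R^s} R and in the second via f·∂_s(r) ⊗ g ∈ R ⊗_{R^s} R (this realizes the splitting B_sB_s ≅ B_s(1) ⊕ B_s(−1) of Soergel bimodules, forgetting grading shifts). -/

import Mathlib

/-!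
Over `Rˢ` the ring `R` is free with basis `1, ρ`: since `s α = -α` and `s ρ = ρ - α`, the
Demazure operator has `s`-invariant values, and every `f` splits as
`f = (f - ∂ₛf·ρ) + ∂ₛf·ρ` with both coefficients in `Rˢ`, uniquely because `∂ₛ` kills `Rˢ`
and `∂ₛρ = 1`. Tensoring `R ≅ Rˢ × Rˢ` in the middle factor gives
`R ⊗ R ⊗ R ≅ (R ⊗ R) × (R ⊗ R)`, and the twisted Leibniz rule identifies the first
coefficient `f - ∂ₛf·ρ` with `∂ₛ(-f·(s·ρ))`.
-/

open MvPolynomial TensorProduct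

set_option synthInstance.maxHeartbeats 1000000
set_option maxHeartbeats 1000000

/-- The polynomial on `V = Fin n → ℝ` representing the linear form with coefficient
vector `g`, i.e. `v ↦ ∑ i, g i * v i`. -/
noncomputable def linForm (n : ℕ) (g : Fin n → ℝ) : MvPolynomial (Fin n) ℝ :=
  ∑ i, MvPolynomial.C (g i) * MvPolynomial.X i

/-- The algebra automorphism of `R = ℝ[X₁,…,Xₙ]` (polynomial functions on `V = Fin n → ℝ`)
given by `(s·f)(v) = f (s v)` for the reflection `s(v) = v - ⟨α_s, v⟩ α_s^∨`, where the
linear form `α_s` has coefficient vector `a` and the vector `α_s^∨` has coordinates `c`. -/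
noncomputable def reflAct (n : ℕ) (a c : Fin n → ℝ) :
    MvPolynomial (Fin n) ℝ →ₐ[ℝ] MvPolynomial (Fin n) ℝ :=
  MvPolynomial.aeval fun j => MvPolynomial.X j - MvPolynomial.C (c j) * linForm n a

/-- The subalgebra `Rˢ ⊆ R` of `s`-invariant polynomials. -/
noncomputable def invariants (n : ℕ) (a c : Fin n → ℝ) :
    Subalgebra ℝ (MvPolynomial (Fin n) ℝ) :=
  AlgHom.equalizer (reflAct n a c) (AlgHom.id ℝ (MvPolynomial (Fin n) ℝ))

section

variable {A B M N : Type*} [CommSemiring A] [Semiring B] [Algebra A B]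
  [AddCommMonoid M] [Module A M] [AddCommMonoid N] [Module A N]

noncomputable def TensorProduct.equivProdOfMiddleEquivProd (e : M ≃ₗ[A] A × A) :
    B ⊗[A] (M ⊗[A] N) ≃ₗ[B] (B ⊗[A] N) × (B ⊗[A] N) :=
  AlgebraTensorModule.congr (LinearEquiv.refl B B)
      (congr e (LinearEquiv.refl A N) ≪≫ₗ prodLeft A A A A N ≪≫ₗ
        (TensorProduct.lid A N).prodCongr (TensorProduct.lid A N)) ≪≫ₗ
    prodRight A B B N N

theorem TensorProduct.equivProdOfMiddleEquivProd_tmul (e : M ≃ₗ[A] A × A) (b : B) (m : M)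
    (x : N) :
    equivProdOfMiddleEquivProd e (b ⊗ₜ (m ⊗ₜ x)) =
      (b ⊗ₜ ((e m).1 • x), b ⊗ₜ ((e m).2 • x)) := by
  rcases h : e m with ⟨u, v⟩
  simp [equivProdOfMiddleEquivProd, h]

end

section Reflection

variable {n : ℕ} {a c : Fin n → ℝ}

theorem reflAct_X (j : Fin n) : reflAct n a c (X j) = X j - C (c j) * linForm n a := by
  simp [reflAct]

theorem reflAct_C (x : ℝ) : reflAct n a c (C x) = C x :=
  (reflAct n a c).commutes x

theorem reflAct_linForm (g : Fin n → ℝ) :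
    reflAct n a c (linForm n g) = linForm n g - C (∑ i, g i * c i) * linForm n a := by
  simp only [linForm, map_sum, map_mul, reflAct_C, reflAct_X, Finset.sum_mul,
    mul_sub, Finset.sum_sub_distrib]
  congr 1
  exact Finset.sum_congr rfl fun i _ => by ring

theorem linForm_ne_zero (hac : ∑ i, a i * c i = 2) : linForm n a ≠ 0 := by
  intro h
  have : eval c (linForm n a) = 2 := by simpa [linForm] using hac
  simp [h] at this

theorem reflAct_linForm_self (hac : ∑ i, a i * c i = 2) :
    reflAct n a c (linForm n a) = -linForm n a := by
  rw [reflAct_linForm, hac, map_ofNat]; ring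

theorem reflAct_reflAct (hac : ∑ i, a i * c i = 2) (f : MvPolynomial (Fin n) ℝ) :
    reflAct n a c (reflAct n a c f) = f := by
  suffices (reflAct n a c).comp (reflAct n a c) = AlgHom.id ℝ _ from AlgHom.congr_fun this f
  refine MvPolynomial.algHom_ext fun j => ?_
  simp only [AlgHom.comp_apply, AlgHom.id_apply, reflAct_X, map_sub, map_mul, reflAct_C,
    reflAct_linForm_self hac]
  ring

theorem linForm_dvd_sub_reflAct (a c : Fin n → ℝ) (f : MvPolynomial (Fin n) ℝ) :
    linForm n a ∣ f - reflAct n a c f := by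
  induction f using MvPolynomial.induction_on with
  | C x => simp
  | add f g hf hg => simpa only [map_add, add_sub_add_comm] using dvd_add hf hg
  | mul_X f i hf =>
    obtain ⟨k, hk⟩ := hf
    refine ⟨k * X i + C (c i) * reflAct n a c f, ?_⟩
    rw [map_mul, reflAct_X]
    linear_combination (X i : MvPolynomial (Fin n) ℝ) * hk

noncomputable def demazure (a c : Fin n → ℝ) (f : MvPolynomial (Fin n) ℝ) :
    MvPolynomial (Fin n) ℝ :=
  (linForm_dvd_sub_reflAct a c f).choose

theorem linForm_mul_demazure (a c : Fin n → ℝ) (f : MvPolynomial (Fin n) ℝ) :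
    linForm n a * demazure a c f = f - reflAct n a c f :=
  (linForm_dvd_sub_reflAct a c f).choose_spec.symm

theorem demazure_eq_of_linForm_mul_eq (hac : ∑ i, a i * c i = 2) {f d : MvPolynomial (Fin n) ℝ}
    (h : linForm n a * d = f - reflAct n a c f) : demazure a c f = d :=
  mul_left_cancel₀ (linForm_ne_zero hac) (by rw [linForm_mul_demazure, h])

theorem reflAct_demazure (hac : ∑ i, a i * c i = 2) (f : MvPolynomial (Fin n) ℝ) :
    reflAct n a c (demazure a c f) = demazure a c f := by
  refine mul_left_cancel₀ (linForm_ne_zero hac) ?_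
  have h := congr_arg (reflAct n a c) (linForm_mul_demazure a c f)
  rw [map_mul, map_sub, reflAct_linForm_self hac, reflAct_reflAct hac] at h
  linear_combination -h - linForm_mul_demazure a c f

theorem demazure_mem_invariants (hac : ∑ i, a i * c i = 2) (f : MvPolynomial (Fin n) ℝ) :
    demazure a c f ∈ invariants n a c :=
  (AlgHom.mem_equalizer _ _ _).mpr (reflAct_demazure hac f)

theorem demazure_add (hac : ∑ i, a i * c i = 2) (f g : MvPolynomial (Fin n) ℝ) :
    demazure a c (f + g) = demazure a c f + demazure a c g :=
  demazure_eq_of_linForm_mul_eq hac <| by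
    rw [mul_add, linForm_mul_demazure, linForm_mul_demazure, map_add]; ring

theorem demazure_invariant_mul (hac : ∑ i, a i * c i = 2) (u : invariants n a c)
    (f : MvPolynomial (Fin n) ℝ) : demazure a c (u * f) = u * demazure a c f :=
  demazure_eq_of_linForm_mul_eq hac <| by
    rw [map_mul, (AlgHom.mem_equalizer _ _ _).mp u.2, AlgHom.id_apply]
    linear_combination (u : MvPolynomial (Fin n) ℝ) * linForm_mul_demazure a c f

variable {ρ : Fin n → ℝ}

theorem demazure_invariant_add_mul_linForm (hac : ∑ i, a i * c i = 2)
    (hρ : ∑ i, ρ i * c i = 1) (u v : invariants n a c) :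
    demazure a c (u + v * linForm n ρ) = v :=
  demazure_eq_of_linForm_mul_eq hac <| by
    rw [map_add, map_mul, (AlgHom.mem_equalizer _ _ _).mp u.2,
      (AlgHom.mem_equalizer _ _ _).mp v.2, reflAct_linForm, hρ, map_one]
    simp only [AlgHom.id_apply]
    ring

theorem sub_demazure_mul_linForm_mem_invariants (hac : ∑ i, a i * c i = 2)
    (hρ : ∑ i, ρ i * c i = 1) (f : MvPolynomial (Fin n) ℝ) :
    f - demazure a c f * linForm n ρ ∈ invariants n a c := by
  refine (AlgHom.mem_equalizer _ _ _).mpr ?_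
  rw [map_sub, map_mul, reflAct_demazure hac, reflAct_linForm, hρ, map_one, AlgHom.id_apply]
  linear_combination linForm_mul_demazure a c f

theorem demazure_neg_mul_reflAct_linForm (hac : ∑ i, a i * c i = 2) (hρ : ∑ i, ρ i * c i = 1)
    (f : MvPolynomial (Fin n) ℝ) :
    demazure a c (-(f * reflAct n a c (linForm n ρ))) = f - demazure a c f * linForm n ρ :=
  demazure_eq_of_linForm_mul_eq hac <| by
    rw [map_neg, map_mul, reflAct_reflAct hac, reflAct_linForm, hρ, map_one]
    linear_combination -linForm n ρ * linForm_mul_demazure a c f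

noncomputable def equivInvariantsProd (hac : ∑ i, a i * c i = 2) (hρ : ∑ i, ρ i * c i = 1) :
    MvPolynomial (Fin n) ℝ ≃ₗ[invariants n a c] invariants n a c × invariants n a c where
  toFun f :=
    (⟨f - demazure a c f * linForm n ρ, sub_demazure_mul_linForm_mem_invariants hac hρ f⟩,
      ⟨demazure a c f, demazure_mem_invariants hac f⟩)
  invFun p := p.1 + p.2 * linForm n ρ
  map_add' f g := Prod.ext
    (Subtype.ext <| by simp only [demazure_add hac, Prod.fst_add, Subalgebra.coe_add]; ring)
    (Subtype.ext <| demazure_add hac f g)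
  map_smul' u f := Prod.ext
    (Subtype.ext <| by
      simp only [Subalgebra.smul_def, smul_eq_mul, demazure_invariant_mul hac, Prod.smul_fst,
        RingHom.id_apply, Subalgebra.coe_mul]
      ring)
    (Subtype.ext <| demazure_invariant_mul hac u f)
  left_inv f := by simp
  right_inv p := by
    have h := demazure_invariant_add_mul_linForm hac hρ p.1 p.2
    exact Prod.ext (Subtype.ext <| by simp only [h]; ring) (Subtype.ext h)

@[simp]
theorem equivInvariantsProd_apply (hac : ∑ i, a i * c i = 2) (hρ : ∑ i, ρ i * c i = 1)
    (f : MvPolynomial (Fin n) ℝ) :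
    equivInvariantsProd hac hρ f =
      (⟨f - demazure a c f * linForm n ρ, sub_demazure_mul_linForm_mem_invariants hac hρ f⟩,
        ⟨demazure a c f, demazure_mem_invariants hac f⟩) :=
  rfl

end Reflection

/-- The map `f ⊗ r ⊗ g ↦ (f·∂ₛ(-r·(s·ρ)) ⊗ g, f·∂ₛ(r) ⊗ g)` is an isomorphism of
`R`-bimodules `R ⊗_{Rˢ} R ⊗_{Rˢ} R ≅ (R ⊗_{Rˢ} R) ⊕ (R ⊗_{Rˢ} R)` (realizing the splitting
`BₛBₛ ≅ Bₛ(1) ⊕ Bₛ(-1)`, forgetting grading shifts).  Here `ρ = linForm n r` has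
`⟨ρ, αₛ^∨⟩ = 1` and the Demazure values `∂ₛ(-r·(s·ρ))`, `∂ₛ(r)` are characterized as the
(unique) polynomials `d₁`, `d₂` with `αₛ·d₁ = (-r·(s·ρ)) - s·(-r·(s·ρ))` and
`αₛ·d₂ = r - s·r`. -/
theorem middle_tensor_splitting (n : ℕ) (a c rv : Fin n → ℝ)
    (hac : ∑ i, a i * c i = 2) (hrc : ∑ i, rv i * c i = 1) :
    ∃ e : (MvPolynomial (Fin n) ℝ ⊗[invariants n a c]
            (MvPolynomial (Fin n) ℝ ⊗[invariants n a c] MvPolynomial (Fin n) ℝ))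
          ≃ₗ[MvPolynomial (Fin n) ℝ]
          ((MvPolynomial (Fin n) ℝ ⊗[invariants n a c] MvPolynomial (Fin n) ℝ) ×
            (MvPolynomial (Fin n) ℝ ⊗[invariants n a c] MvPolynomial (Fin n) ℝ)),
      ∀ f r g d₁ d₂ : MvPolynomial (Fin n) ℝ,
        linForm n a * d₁ =
          (-(r * reflAct n a c (linForm n rv))) -
            reflAct n a c (-(r * reflAct n a c (linForm n rv))) →
        linForm n a * d₂ = r - reflAct n a c r →
        e (f ⊗ₜ[invariants n a c] (r ⊗ₜ[invariants n a c] g)) =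
          ((f * d₁) ⊗ₜ[invariants n a c] g, (f * d₂) ⊗ₜ[invariants n a c] g) := by
  refine ⟨equivProdOfMiddleEquivProd (equivInvariantsProd hac hrc),
    fun f r g d₁ d₂ h₁ h₂ => ?_⟩
  have hd₁ : r - demazure a c r * linForm n rv = d₁ := by
    rw [← demazure_neg_mul_reflAct_linForm hac hrc, demazure_eq_of_linForm_mul_eq hac h₁]
  have hd₂ : demazure a c r = d₂ := demazure_eq_of_linForm_mul_eq hac h₂
  subst hd₁ hd₂
  refine (equivProdOfMiddleEquivProd_tmul _ _ _ _).trans ?_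
  rw [← smul_tmul, ← smul_tmul, equivInvariantsProd_apply, Subalgebra.smul_def,
    Subalgebra.smul_def, smul_eq_mul, smul_eq_mul, mul_comm f, mul_comm f]
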